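/- arXiv:1804.05785 — 3 statements merged into one kernel-verified Lean document; each statement's English description precedes it below -/
import Mathlib

section
/- Assume parallel trends (PT), no anticipation (NA), and T ≥ 2. Fix an integer l with 0 ≤ l ≤ T−2. Define the interaction-weighted estimator ν̂_l(n) := Σ_{e=1}^{T−1−l} (N_{{e}}(n) / Σ_{e'=1}^{T−1−l} N_{{e'}}(n)) · δ̂^{0,{T}}_{e,l}(n). Then ν̂_l(n) converges almost surely, as n → ∞, to Σ_{e=1}^{T−1−l} P(E = e | 1 ≤ E ≤ T−1−l)·CATT(e,l), a convex weighted average of the cohort-specific average treatment effects at relative time l with weights equal to the cohort shares. (Proposition 4: probability limit of the dynamic IW estimator.) -/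
open MeasureTheory Filter

noncomputable section

/-- Conditional expectation `E[Z | A] := E[Z·1_A] / P(A)` given an event `A`. -/
def cexp {Ω : Type*} [MeasurableSpace Ω] (μ : Measure Ω) (Z : Ω → ℝ) (A : Set Ω) : ℝ :=
  (∫ ω in A, Z ω ∂μ) / (μ A).toReal

/-- Observed outcome `Y_t := Y∞_t + Σ_{e=1}^{T} (Yᵉ_t − Y∞_t)·1{E = e}`. -/
def obsY {Ω : Type*} (T : ℕ) (E : Ω → ℕ) (Ye : ℕ → ℕ → Ω → ℝ) (Yinf : ℕ → Ω → ℝ)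
    (t : ℕ) (ω : Ω) : ℝ :=
  Yinf t ω + ∑ e ∈ Finset.Icc 1 T, (Ye e t ω - Yinf t ω) * (if E ω = e then 1 else 0)

/-- Cohort-specific average treatment effect on the treated,
`CATT(e,l) := E[Yᵉ_{e+l} − Y∞_{e+l} | E = e]`. -/
def CATT {Ω : Type*} [MeasurableSpace Ω] (μ : Measure Ω) (E : Ω → ℕ)
    (Ye : ℕ → ℕ → Ω → ℝ) (Yinf : ℕ → Ω → ℝ) (e : ℕ) (l : ℤ) : ℝ :=
  cexp μ (fun ω => Ye e ((e : ℤ) + l).toNat ω - Yinf ((e : ℤ) + l).toNat ω) {ω | E ω = e}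

/-- Parallel trends in baseline outcome. -/
def PT {Ω : Type*} [MeasurableSpace Ω] (μ : Measure Ω) (T : ℕ) (E : Ω → ℕ)
    (Yinf : ℕ → Ω → ℝ) : Prop :=
  ∀ e ∈ Finset.Icc 1 T, ∀ s ≤ T, ∀ t ≤ T,
    cexp μ (fun ω => Yinf t ω - Yinf s ω) {ω | E ω = e}
      = ∫ ω, (Yinf t ω - Yinf s ω) ∂μ

/-- No anticipatory behavior. -/
def NA {Ω : Type*} [MeasurableSpace Ω] (μ : Measure Ω) (T : ℕ)
    (Ye : ℕ → ℕ → Ω → ℝ) (Yinf : ℕ → Ω → ℝ) : Prop :=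
  ∀ e ∈ Finset.Icc 1 T, ∀ t < e, Ye e t =ᵐ[μ] Yinf t

/-- Number of indices `i < n` whose event time lies in `A`. -/
def sampleCount {Ω' : Type*} (Eseq : ℕ → Ω' → ℕ) (A : Finset ℕ) (n : ℕ) (ω' : Ω') : ℕ :=
  ((Finset.range n).filter (fun i => Eseq i ω' ∈ A)).card

/-- The sample difference-in-differences estimator `δ̂^{s,C}_{e,l}(n)`
(Lean's convention `x/0 = 0` handles vanishing denominators). -/
def sampleDID {Ω' : Type*} (Eseq : ℕ → Ω' → ℕ) (Yseq : ℕ → ℕ → Ω' → ℝ)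
    (e : ℕ) (l : ℤ) (s : ℕ) (C : Finset ℕ) (n : ℕ) (ω' : Ω') : ℝ :=
  (∑ i ∈ (Finset.range n).filter (fun i => Eseq i ω' = e),
      (Yseq i ((e : ℤ) + l).toNat ω' - Yseq i s ω'))
      / (sampleCount Eseq {e} n ω' : ℝ)
    - (∑ i ∈ (Finset.range n).filter (fun i => Eseq i ω' ∈ C),
        (Yseq i ((e : ℤ) + l).toNat ω' - Yseq i s ω'))
      / (sampleCount Eseq C n ω' : ℝ)

/-- The sequence `((E_i, (Y_{i,t})_t))_i` is i.i.d. with each term distributed as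
`(E, (Y_t)_t)`. -/
def IIDSample {Ω Ω' : Type*} [MeasurableSpace Ω] [MeasurableSpace Ω']
    (μ : Measure Ω) (μ' : Measure Ω') (T : ℕ) (E : Ω → ℕ)
    (Ye : ℕ → ℕ → Ω → ℝ) (Yinf : ℕ → Ω → ℝ)
    (Eseq : ℕ → Ω' → ℕ) (Yseq : ℕ → ℕ → Ω' → ℝ) : Prop :=
  ProbabilityTheory.iIndepFun
      (fun i ω' => ((Eseq i ω', fun t : Fin (T + 1) => Yseq i t ω') :
        ℕ × (Fin (T + 1) → ℝ))) μ'
    ∧ ∀ i : ℕ,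
        Measure.map (fun ω' => ((Eseq i ω', fun t : Fin (T + 1) => Yseq i t ω') :
          ℕ × (Fin (T + 1) → ℝ))) μ'
        = Measure.map (fun ω => ((E ω, fun t : Fin (T + 1) => obsY T E Ye Yinf t ω) :
          ℕ × (Fin (T + 1) → ℝ))) μ

/-!
By the strong law of large numbers for the i.i.d. pairs `(E_i, (Y_{i,t})_t)`, the cohort
frequencies `N_{e}(n)/n` and the cohort averages `(1/n) Σ_{i<n, E_i=e} (Y_{i,t} - Y_{i,0})`
converge almost surely to `P(E = e)` and `E[(Y_t - Y_0)·1{E = e}]`. Hence the weights tend to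
the cohort shares and each `δ̂^{0,{T}}_{e,l}` to the population DID
`E[Y_{e+l} - Y_0 | E = e] - E[Y_{e+l} - Y_0 | E = T]`. By no anticipation, period `0` is
untreated for every cohort and period `e + l < T` is untreated for cohort `T`, so both terms
are treatment effect plus baseline trend; parallel trends makes the two baseline trends equal,
and what is left is `CATT(e,l)`.
-/

open ProbabilityTheory Finset

theorem Filter.Tendsto.div_of_div_natCast {a b : ℕ → ℝ} {x y : ℝ}
    (ha : Tendsto (fun n => a n / n) atTop (nhds x))
    (hb : Tendsto (fun n => b n / n) atTop (nhds y)) (hy : y ≠ 0) :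
    Tendsto (fun n => a n / b n) atTop (nhds (x / y)) := by
  refine (ha.div hb hy).congr' ?_
  filter_upwards [eventually_ne_atTop 0] with n hn
  exact div_div_div_cancel_right₀ (Nat.cast_ne_zero.mpr hn) _ _

theorem tendsto_div_sum_of_tendsto_div_natCast {ι : Type*} {s : Finset ι} {a : ι → ℕ → ℝ}
    {p : ι → ℝ} (h : ∀ i ∈ s, Tendsto (fun n => a i n / n) atTop (nhds (p i)))
    (hp : ∑ i ∈ s, p i ≠ 0) {j : ι} (hj : j ∈ s) :
    Tendsto (fun n => a j n / ∑ i ∈ s, a i n) atTop (nhds (p j / ∑ i ∈ s, p i)) := by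
  refine (h j hj).div_of_div_natCast ?_ hp
  simpa only [Finset.sum_div] using tendsto_finsetSum s h

theorem ae_tendsto_sum_range_comp_div {Ω Ω' β : Type*} [MeasurableSpace Ω]
    [MeasurableSpace Ω'] [MeasurableSpace β] {μ : Measure Ω} [IsProbabilityMeasure μ]
    {μ' : Measure Ω'} {X : ℕ → Ω' → β} {Φ : Ω → β} (hindep : iIndepFun X μ')
    (hident : ∀ i, μ'.map (X i) = μ.map Φ) (hΦ : AEMeasurable Φ μ) {f : β → ℝ}
    (hf : Measurable f) (hint : Integrable (f ∘ Φ) μ) :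
    ∀ᵐ ω' ∂μ', Tendsto (fun n : ℕ => (∑ i ∈ range n, f (X i ω')) / n) atTop
      (nhds (∫ ω, f (Φ ω) ∂μ)) := by
  have hX : ∀ i, IdentDistrib (X i) Φ μ' μ := fun i =>
    { aemeasurable_fst := .of_map_ne_zero <| by
        rw [hident i]; exact (Measure.isProbabilityMeasure_map hΦ).ne_zero
      aemeasurable_snd := hΦ
      map_eq := hident i }
  have hfX : ∀ i, IdentDistrib (f ∘ X i) (f ∘ Φ) μ' μ := fun i => (hX i).comp hf
  have hlaw := strong_law_ae_real (fun i => f ∘ X i) ((hfX 0).integrable_iff.mpr hint)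
    (fun i j hij => (hindep.indepFun hij).comp hf hf) (fun i => (hfX i).trans (hfX 0).symm)
  rwa [(hfX 0).integral_eq] at hlaw

theorem toReal_measure_eq_and_mem_div {Ω α : Type*} [MeasurableSpace Ω] [MeasurableSpace α]
    [MeasurableSingletonClass α] {μ : Measure Ω} [IsFiniteMeasure μ] {X : Ω → α}
    (hX : Measurable X) {s : Finset α} {a : α} (ha : a ∈ s) :
    (μ {ω | X ω = a ∧ X ω ∈ s}).toReal / (μ {ω | X ω ∈ s}).toReal
      = (μ {ω | X ω = a}).toReal / ∑ b ∈ s, (μ {ω | X ω = b}).toReal := by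
  have hset : {ω | X ω = a ∧ X ω ∈ s} = {ω | X ω = a} :=
    Set.ext fun ω => and_iff_left_of_imp fun h => h ▸ ha
  rw [hset, ← ENNReal.toReal_sum fun _ _ => measure_ne_top μ _]
  congr 2
  exact (sum_measure_preimage_singleton s fun b _ => hX (measurableSet_singleton b)).symm

section ConditionalExpectation

variable {Ω : Type*} [MeasurableSpace Ω] {μ : Measure Ω} {Z Z' : Ω → ℝ} {A : Set Ω}

theorem cexp_add (hZ : IntegrableOn Z A μ) (hZ' : IntegrableOn Z' A μ) :
    cexp μ (fun ω => Z ω + Z' ω) A = cexp μ Z A + cexp μ Z' A := by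
  rw [cexp, integral_add hZ hZ', add_div, cexp, cexp]

theorem cexp_congr_ae (h : Z =ᵐ[μ.restrict A] Z') : cexp μ Z A = cexp μ Z' A := by
  rw [cexp, cexp, integral_congr_ae h]

end ConditionalExpectation

section Outcomes

variable {Ω : Type*} {T : ℕ} {E : Ω → ℕ} {Ye : ℕ → ℕ → Ω → ℝ} {Yinf : ℕ → Ω → ℝ}

theorem obsY_eq_of_eq {e t : ℕ} {ω : Ω} (he : e ∈ Icc 1 T) (hω : E ω = e) :
    obsY T E Ye Yinf t ω = Ye e t ω := by
  rw [obsY, Finset.sum_eq_single e (fun b _ hb => by simp [hω, Ne.symm hb])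
    (fun h => absurd he h)]
  simp [hω]

variable [MeasurableSpace Ω] {μ : Measure Ω}

theorem integrable_obsY (hE : Measurable E) {t : ℕ}
    (hYe : ∀ e ∈ Icc 1 T, Integrable (Ye e t) μ) (hYinf : Integrable (Yinf t) μ) :
    Integrable (obsY T E Ye Yinf t) μ := by
  refine hYinf.add (integrable_finsetSum _ fun e he => ?_)
  refine (((hYe e he).sub hYinf).indicator (hE (measurableSet_singleton e))).congr
    (.of_forall fun ω => ?_)
  by_cases h : E ω = e <;> simp [h]

section Identification

variable (hE : Measurable E) (hPT : PT μ T E Yinf) (hNA : NA μ T Ye Yinf)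
  (hYe : ∀ e ∈ Icc 1 T, ∀ t ≤ T, Integrable (Ye e t) μ)
  (hYinf : ∀ t ≤ T, Integrable (Yinf t) μ)
include hE hPT hNA hYe hYinf

theorem cexp_obsY_sub_eq {e s t : ℕ} (he : e ∈ Icc 1 T) (hs : s < e) (ht : t ≤ T) :
    cexp μ (fun ω => obsY T E Ye Yinf t ω - obsY T E Ye Yinf s ω) {ω | E ω = e}
      = cexp μ (fun ω => Ye e t ω - Yinf t ω) {ω | E ω = e}
        + ∫ ω, (Yinf t ω - Yinf s ω) ∂μ := by
  have hsT : s ≤ T := hs.le.trans (Finset.mem_Icc.mp he).2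
  calc _ = cexp μ (fun ω => (Ye e t ω - Yinf t ω) + (Yinf t ω - Yinf s ω)) {ω | E ω = e} := by
        refine cexp_congr_ae ?_
        filter_upwards [ae_restrict_mem (hE (measurableSet_singleton e)),
          ae_restrict_of_ae (hNA e he s hs)] with ω hω hna
        rw [obsY_eq_of_eq he hω, obsY_eq_of_eq he hω, hna]
        ring
    _ = _ := by
        rw [cexp_add (Z := fun ω => Ye e t ω - Yinf t ω) (Z' := fun ω => Yinf t ω - Yinf s ω)
          ((hYe e he t ht).sub (hYinf t ht)).integrableOn
          ((hYinf t ht).sub (hYinf s hsT)).integrableOn, hPT e he s hsT t ht]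

theorem cexp_obsY_sub_sub_cexp_obsY_sub {e c s t : ℕ} (he : e ∈ Icc 1 T) (hc : c ∈ Icc 1 T)
    (hse : s < e) (hsc : s < c) (htc : t < c) :
    cexp μ (fun ω => obsY T E Ye Yinf t ω - obsY T E Ye Yinf s ω) {ω | E ω = e}
      - cexp μ (fun ω => obsY T E Ye Yinf t ω - obsY T E Ye Yinf s ω) {ω | E ω = c}
      = cexp μ (fun ω => Ye e t ω - Yinf t ω) {ω | E ω = e} := by
  have htT : t ≤ T := htc.le.trans (Finset.mem_Icc.mp hc).2
  have hcontrol : cexp μ (fun ω => Ye c t ω - Yinf t ω) {ω | E ω = c} = 0 := by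
    rw [cexp_congr_ae (Z' := 0) (ae_restrict_of_ae ((hNA c hc t htc).mono fun ω h => by
      simp [h]))]
    simp [cexp]
  rw [cexp_obsY_sub_eq hE hPT hNA hYe hYinf he hse htT,
    cexp_obsY_sub_eq hE hPT hNA hYe hYinf hc hsc htT, hcontrol]
  ring

end Identification

end Outcomes

section Sample

variable {Ω Ω' : Type*} [MeasurableSpace Ω] [MeasurableSpace Ω']
  {μ : Measure Ω} [IsProbabilityMeasure μ] {μ' : Measure Ω'}
  {T : ℕ} {E : Ω → ℕ} {Ye : ℕ → ℕ → Ω → ℝ} {Yinf : ℕ → Ω → ℝ}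
  {Eseq : ℕ → Ω' → ℕ} {Yseq : ℕ → ℕ → Ω' → ℝ}
  (hiid : IIDSample μ μ' T E Ye Yinf Eseq Yseq) (hE : Measurable E)
include hiid hE

theorem ae_tendsto_sum_filter_div
    (hobs : ∀ t : Fin (T + 1), AEMeasurable (obsY T E Ye Yinf t) μ)
    (A : Finset ℕ) {g : (Fin (T + 1) → ℝ) → ℝ} (hg : Measurable g)
    (hgi : Integrable (fun ω => g fun t => obsY T E Ye Yinf t ω) μ) :
    ∀ᵐ ω' ∂μ', Tendsto (fun n : ℕ =>
        (∑ i ∈ (range n).filter (fun i => Eseq i ω' ∈ A), g fun t => Yseq i t ω') / n)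
      atTop (nhds (∫ ω in {ω | E ω ∈ A}, g (fun t => obsY T E Ye Yinf t ω) ∂μ)) := by
  have hA : MeasurableSet {x : ℕ × (Fin (T + 1) → ℝ) | x.1 ∈ A} :=
    measurable_fst A.measurableSet
  have hΦ : AEMeasurable (fun ω => ((E ω, fun t : Fin (T + 1) => obsY T E Ye Yinf t ω) :
      ℕ × (Fin (T + 1) → ℝ))) μ :=
    hE.aemeasurable.prodMk (aemeasurable_pi_lambda _ hobs)
  have hEA : MeasurableSet {ω | E ω ∈ A} := hE A.measurableSet
  have hlaw := ae_tendsto_sum_range_comp_div hiid.1 hiid.2 hΦ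
    (f := fun x => if x.1 ∈ A then g x.2 else 0) ((hg.comp measurable_snd).ite hA measurable_const)
    ((hgi.indicator hEA).congr (.of_forall fun ω => by simp [Set.indicator_apply]))
  rw [← integral_indicator hEA]
  simpa only [sum_filter, Set.indicator_apply, Set.mem_ofPred_eq] using hlaw

theorem ae_tendsto_sampleCount_div
    (hobs : ∀ t : Fin (T + 1), AEMeasurable (obsY T E Ye Yinf t) μ) (A : Finset ℕ) :
    ∀ᵐ ω' ∂μ', Tendsto (fun n => (sampleCount Eseq A n ω' : ℝ) / n) atTop
      (nhds (μ {ω | E ω ∈ A}).toReal) := by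
  filter_upwards [ae_tendsto_sum_filter_div hiid hE hobs A measurable_const
    (integrable_const (1 : ℝ))] with ω' h
  simpa [sampleCount, measureReal_def] using h

theorem ae_tendsto_sampleDID (hobs : ∀ t ≤ T, Integrable (obsY T E Ye Yinf t) μ)
    {e : ℕ} {l : ℤ} {s : ℕ} {C : Finset ℕ} (ht : ((e : ℤ) + l).toNat ≤ T) (hs : s ≤ T)
    (he : μ {ω | E ω = e} ≠ 0) (hC : μ {ω | E ω ∈ C} ≠ 0) :
    ∀ᵐ ω' ∂μ', Tendsto (fun n => sampleDID Eseq Yseq e l s C n ω') atTop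
      (nhds (cexp μ (fun ω => obsY T E Ye Yinf ((e : ℤ) + l).toNat ω - obsY T E Ye Yinf s ω)
          {ω | E ω = e}
        - cexp μ (fun ω => obsY T E Ye Yinf ((e : ℤ) + l).toNat ω - obsY T E Ye Yinf s ω)
          {ω | E ω ∈ C})) := by
  have hmeas : ∀ t : Fin (T + 1), AEMeasurable (obsY T E Ye Yinf t) μ := fun t =>
    (hobs t (Nat.lt_succ_iff.mp t.isLt)).aemeasurable
  have hsum (A : Finset ℕ) := ae_tendsto_sum_filter_div hiid hE hmeas A
    (g := fun y => y ⟨_, Nat.lt_succ_of_le ht⟩ - y ⟨s, Nat.lt_succ_of_le hs⟩)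
    ((measurable_pi_apply _).sub (measurable_pi_apply _)) ((hobs _ ht).sub (hobs s hs))
  have hne (A : Finset ℕ) (hA : μ {ω | E ω ∈ A} ≠ 0) : (μ {ω | E ω ∈ A}).toReal ≠ 0 :=
    ENNReal.toReal_ne_zero.mpr ⟨hA, measure_ne_top μ _⟩
  filter_upwards [hsum {e}, hsum C, ae_tendsto_sampleCount_div hiid hE hmeas {e},
    ae_tendsto_sampleCount_div hiid hE hmeas C] with ω' hsume hsumC hcounte hcountC
  have hlim := (hsume.div_of_div_natCast hcounte (hne {e} (by simpa using he))).sub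
    (hsumC.div_of_div_natCast hcountC (hne C hC))
  simpa only [sampleDID, cexp, Finset.mem_singleton] using hlim

theorem ae_tendsto_sampleDID_CATT (hPT : PT μ T E Yinf) (hNA : NA μ T Ye Yinf)
    (hYe : ∀ e ∈ Icc 1 T, ∀ t ≤ T, Integrable (Ye e t) μ)
    (hYinf : ∀ t ≤ T, Integrable (Yinf t) μ) {e l : ℕ} (he : e ∈ Icc 1 T) (hel : e + l < T)
    (he0 : μ {ω | E ω = e} ≠ 0) (hT0 : μ {ω | E ω = T} ≠ 0) :
    ∀ᵐ ω' ∂μ', Tendsto (fun n => sampleDID Eseq Yseq e l 0 {T} n ω') atTop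
      (nhds (CATT μ E Ye Yinf e l)) := by
  have hTT : T ∈ Icc 1 T := Finset.mem_Icc.mpr ⟨by omega, le_rfl⟩
  have hTl : ((e : ℤ) + l).toNat = e + l := by omega
  have hobs (t : ℕ) (ht : t ≤ T) : Integrable (obsY T E Ye Yinf t) μ :=
    integrable_obsY hE (fun e he => hYe e he t ht) (hYinf t ht)
  filter_upwards [ae_tendsto_sampleDID hiid hE hobs (C := {T}) (hTl ▸ hel.le) (Nat.zero_le T)
    he0 (by simpa using hT0)] with ω' hdid
  simp only [Finset.mem_singleton, hTl] at hdid
  rwa [cexp_obsY_sub_sub_cexp_obsY_sub hE hPT hNA hYe hYinf he hTT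
    (Finset.mem_Icc.mp he).1 (Finset.mem_Icc.mp hTT).1 hel] at hdid

end Sample

theorem iw_dynamic_estimator_consistent_general
    {Ω Ω' : Type*} [MeasurableSpace Ω] [MeasurableSpace Ω']
    (μ : Measure Ω) [IsProbabilityMeasure μ]
    (μ' : Measure Ω') [IsProbabilityMeasure μ']
    (T : ℕ)
    (E : Ω → ℕ) (hE : Measurable E)
    (hpos : ∀ e ∈ Finset.Icc 1 T, 0 < μ {ω | E ω = e})
    (Ye : ℕ → ℕ → Ω → ℝ) (Yinf : ℕ → Ω → ℝ)
    (hL2e : ∀ e ∈ Finset.Icc 1 T, ∀ t ≤ T, MemLp (Ye e t) 2 μ)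
    (hL2inf : ∀ t ≤ T, MemLp (Yinf t) 2 μ)
    (hPT : PT μ T E Yinf) (hNA : NA μ T Ye Yinf)
    (Eseq : ℕ → Ω' → ℕ) (Yseq : ℕ → ℕ → Ω' → ℝ)
    (hiid : IIDSample μ μ' T E Ye Yinf Eseq Yseq)
    (l : ℕ) :
    ∀ᵐ ω' ∂μ', Tendsto
      (fun n => ∑ e ∈ Finset.Icc 1 (T - 1 - l),
        ((sampleCount Eseq {e} n ω' : ℝ)
            / ∑ e' ∈ Finset.Icc 1 (T - 1 - l), (sampleCount Eseq {e'} n ω' : ℝ))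
          * sampleDID Eseq Yseq e (l : ℤ) 0 {T} n ω')
      atTop
      (nhds (∑ e ∈ Finset.Icc 1 (T - 1 - l),
        ((μ {ω | E ω = e ∧ 1 ≤ E ω ∧ E ω ≤ T - 1 - l}).toReal
            / (μ {ω | 1 ≤ E ω ∧ E ω ≤ T - 1 - l}).toReal)
          * CATT μ E Ye Yinf e (l : ℤ))) := by
  have hYe : ∀ e ∈ Icc 1 T, ∀ t ≤ T, Integrable (Ye e t) μ := fun e he t ht =>
    (hL2e e he t ht).integrable one_le_two
  have hYinf : ∀ t ≤ T, Integrable (Yinf t) μ := fun t ht => (hL2inf t ht).integrable one_le_two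
  have hobs (t : Fin (T + 1)) : AEMeasurable (obsY T E Ye Yinf t) μ :=
    (integrable_obsY hE (fun e he => hYe e he t t.is_le) (hYinf t t.is_le)).aemeasurable
  have hlim : ∀ᵐ ω' ∂μ', ∀ e ∈ Icc 1 (T - 1 - l),
      Tendsto (fun n => (sampleCount Eseq {e} n ω' : ℝ) / n) atTop
        (nhds (μ {ω | E ω = e}).toReal) ∧
      Tendsto (fun n => sampleDID Eseq Yseq e l 0 {T} n ω') atTop
        (nhds (CATT μ E Ye Yinf e l)) := by
    refine (eventually_all_finset _).2 fun e he => ?_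
    obtain ⟨heT, hTT, helT⟩ : e ∈ Icc 1 T ∧ T ∈ Icc 1 T ∧ e + l < T := by
      simp only [Finset.mem_Icc] at he ⊢; omega
    filter_upwards [ae_tendsto_sampleCount_div hiid hE hobs {e},
      ae_tendsto_sampleDID_CATT hiid hE hPT hNA hYe hYinf heT helT (hpos e heT).ne'
        (hpos T hTT).ne'] with ω' hcount hdid
    exact ⟨by simpa using hcount, hdid⟩
  filter_upwards [hlim] with ω' h
  simp only [← Finset.mem_Icc]
  refine tendsto_finsetSum _ fun e he => ?_
  have hsum : ∑ a ∈ Icc 1 (T - 1 - l), (μ {ω | E ω = a}).toReal ≠ 0 := by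
    refine (Finset.sum_pos (fun a ha => ENNReal.toReal_pos (hpos a ?_).ne' (measure_ne_top μ _))
      ⟨e, he⟩).ne'
    exact Finset.Icc_subset_Icc_right (by omega) ha
  rw [toReal_measure_eq_and_mem_div hE he]
  exact (tendsto_div_sum_of_tendsto_div_natCast (fun e he => (h e he).1) hsum he).mul (h e he).2

/-- Proposition 4: the dynamic interaction-weighted estimator `ν̂_l(n)` converges almost
surely to the cohort-share weighted average
`Σ_{e=1}^{T−1−l} P(E = e | 1 ≤ E ≤ T−1−l)·CATT(e,l)`. -/
theorem iw_dynamic_estimator_consistent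
    {Ω Ω' : Type*} [MeasurableSpace Ω] [MeasurableSpace Ω']
    (μ : Measure Ω) [IsProbabilityMeasure μ]
    (μ' : Measure Ω') [IsProbabilityMeasure μ']
    (T : ℕ) (hT : 2 ≤ T)
    (E : Ω → ℕ) (hE : Measurable E)
    (hsupp : μ {ω | 1 ≤ E ω ∧ E ω ≤ T} = 1)
    (hpos : ∀ e ∈ Finset.Icc 1 T, 0 < μ {ω | E ω = e})
    (Ye : ℕ → ℕ → Ω → ℝ) (Yinf : ℕ → Ω → ℝ)
    (hL2e : ∀ e ∈ Finset.Icc 1 T, ∀ t ≤ T, MemLp (Ye e t) 2 μ)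
    (hL2inf : ∀ t ≤ T, MemLp (Yinf t) 2 μ)
    (hPT : PT μ T E Yinf) (hNA : NA μ T Ye Yinf)
    (Eseq : ℕ → Ω' → ℕ) (Yseq : ℕ → ℕ → Ω' → ℝ)
    (hiid : IIDSample μ μ' T E Ye Yinf Eseq Yseq)
    (l : ℕ) (hl : l ≤ T - 2) :
    ∀ᵐ ω' ∂μ', Tendsto
      (fun n => ∑ e ∈ Finset.Icc 1 (T - 1 - l),
        ((sampleCount Eseq {e} n ω' : ℝ)
            / ∑ e' ∈ Finset.Icc 1 (T - 1 - l), (sampleCount Eseq {e'} n ω' : ℝ))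
          * sampleDID Eseq Yseq e (l : ℤ) 0 {T} n ω')
      atTop
      (nhds (∑ e ∈ Finset.Icc 1 (T - 1 - l),
        ((μ {ω | E ω = e ∧ 1 ≤ E ω ∧ E ω ≤ T - 1 - l}).toReal
            / (μ {ω | 1 ≤ E ω ∧ E ω ≤ T - 1 - l}).toReal)
          * CATT μ E Ye Yinf e (l : ℤ))) :=
  iw_dynamic_estimator_consistent_general μ μ' T E hE hpos Ye Yinf hL2e hL2inf hPT hNA Eseq Yseq
    hiid l

end
end

section
/- Assume conditional parallel trends (CPT) and no anticipation (NA). Then the regression-adjustment (outcome-regression) identification result holds: E[Y_t − Y_0 − g₀ | E = e] = θ₀, where θ₀ = CATT(e,l). (Appendix C: identification of the cohort-specific ATT by covariate-specific time-trend adjustment.) -/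
/-!
On the cohort `{E = e}` the observed outcomes are `Y_t = Yᵉ_t` and, by no anticipation,
`Y_0 = Yᵉ_0 = Y∞_0`, so `Y_t − Y_0 − g₀ = (Yᵉ_t − Y∞_t) + (D − E[D | 𝔊])` with `D = Y∞_t − Y∞_0`.
The first summand averages to `CATT(e, l)`. The second averages to zero on the cohort: conditional
parallel trends says that `D` is conditionally mean-independent of `1{E = e}` given `𝔊`, and then
`E[D·1{E=e}] = E[E[D|𝔊]·E[1{E=e}|𝔊]] = E[E[D|𝔊]·1{E=e}]`.
-/

open MeasureTheory Filter

noncomputable section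

/-- The σ-algebra generated by the covariates `X`. -/
def sigmaX {Ω 𝒳 : Type*} [m𝒳 : MeasurableSpace 𝒳] (X : Ω → 𝒳) : MeasurableSpace Ω :=
  MeasurableSpace.comap X m𝒳

/-- `g₀ := E[Y∞_t − Y∞_0 | σ(X)]` (a fixed version of the conditional expectation). -/
noncomputable def gZero {Ω 𝒳 : Type*} [MeasurableSpace Ω] [MeasurableSpace 𝒳]
    (μ : Measure Ω) (Yinf : ℕ → Ω → ℝ) (X : Ω → 𝒳) (t : ℕ) : Ω → ℝ :=
  μ[fun ω => Yinf t ω - Yinf 0 ω | sigmaX X]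

/-- `m₀(X) := E[1{E=e} | σ(X)]`. -/
noncomputable def mZeroX {Ω 𝒳 : Type*} [MeasurableSpace Ω] [MeasurableSpace 𝒳]
    (μ : Measure Ω) (E : Ω → ℕ) (X : Ω → 𝒳) (e : ℕ) : Ω → ℝ :=
  μ[fun ω => if E ω = e then (1 : ℝ) else 0 | sigmaX X]

/-- `n₀(X) := E[1{E>t} | σ(X)]`. -/
noncomputable def nZeroX {Ω 𝒳 : Type*} [MeasurableSpace Ω] [MeasurableSpace 𝒳]
    (μ : Measure Ω) (E : Ω → ℕ) (X : Ω → 𝒳) (t : ℕ) : Ω → ℝ :=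
  μ[fun ω => if t < E ω then (1 : ℝ) else 0 | sigmaX X]

/-- Conditional parallel trends in baseline outcome, given `𝔊 = σ(X)`:
`E[(Y∞_t − Y∞_s)·1{E=e} | 𝔊] = E[Y∞_t − Y∞_s | 𝔊]·E[1{E=e} | 𝔊]` a.s. -/
def CPT {Ω 𝒳 : Type*} [MeasurableSpace Ω] [MeasurableSpace 𝒳] (μ : Measure Ω) (T : ℕ)
    (E : Ω → ℕ) (Yinf : ℕ → Ω → ℝ) (X : Ω → 𝒳) : Prop :=
  ∀ e ∈ Finset.Icc 1 T, ∀ s ≤ T, ∀ t ≤ T,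
    μ[fun ω => (Yinf t ω - Yinf s ω) * (if E ω = e then (1 : ℝ) else 0) | sigmaX X]
      =ᵐ[μ] fun ω => (μ[fun ω' => Yinf t ω' - Yinf s ω' | sigmaX X]) ω
        * (mZeroX μ E X e) ω

section Indicator

variable {Ω M : Type*} [MulZeroOneClass M]

theorem mul_indicator_one_eq_indicator (f : Ω → M) (s : Set Ω) :
    f * s.indicator 1 = s.indicator f := by
  ext ω
  by_cases hω : ω ∈ s <;> simp [hω]

theorem mul_ite_one_zero_eq_indicator (f : Ω → M) (p : Ω → Prop) [DecidablePred p] :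
    (fun ω => f ω * if p ω then 1 else 0) = {ω | p ω}.indicator f := by
  ext ω
  by_cases hω : p ω <;> simp [hω]

theorem ite_one_zero_eq_indicator_one (p : Ω → Prop) [DecidablePred p] :
    (fun ω => if p ω then (1 : M) else 0) = {ω | p ω}.indicator 1 := by
  ext ω
  by_cases hω : p ω <;> simp [hω]

end Indicator

theorem setIntegral_condExp_eq_of_condExp_indicator_eq_mul {Ω : Type*} {m m₀ : MeasurableSpace Ω}
    {μ : Measure Ω} [IsFiniteMeasure μ] (hm : m ≤ m₀) {f : Ω → ℝ} {s : Set Ω}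
    (hs : MeasurableSet[m₀] s) (h : μ[s.indicator f | m] =ᵐ[μ] μ[f | m] * μ[s.indicator 1 | m]) :
    ∫ ω in s, μ[f | m] ω ∂μ = ∫ ω in s, f ω ∂μ := by
  have hprod := mul_indicator_one_eq_indicator μ[f | m] s
  have hpull : μ[μ[f | m] * s.indicator 1 | m] =ᵐ[μ] μ[f | m] * μ[s.indicator 1 | m] :=
    condExp_mul_of_stronglyMeasurable_left stronglyMeasurable_condExp
      (hprod ▸ integrable_condExp.indicator hs) ((integrable_const 1).indicator hs)
  calc ∫ ω in s, μ[f | m] ω ∂μ = ∫ ω, μ[μ[f | m] * s.indicator 1 | m] ω ∂μ := by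
        rw [integral_condExp hm, hprod, integral_indicator hs]
    _ = ∫ ω, μ[s.indicator f | m] ω ∂μ := integral_congr_ae (hpull.trans h.symm)
    _ = ∫ ω in s, f ω ∂μ := by rw [integral_condExp hm, integral_indicator hs]

theorem CPT.setIntegral_condExp_eq {Ω 𝒳 : Type*} [MeasurableSpace Ω] [MeasurableSpace 𝒳]
    {μ : Measure Ω} [IsFiniteMeasure μ] {T : ℕ} {E : Ω → ℕ} {Yinf : ℕ → Ω → ℝ} {X : Ω → 𝒳}
    (hCPT : CPT μ T E Yinf X) (hE : Measurable E) (hX : Measurable X) {e s t : ℕ}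
    (he : e ∈ Finset.Icc 1 T) (hs : s ≤ T) (ht : t ≤ T) :
    ∫ ω in {ω | E ω = e}, μ[fun ω => Yinf t ω - Yinf s ω | sigmaX X] ω ∂μ
      = ∫ ω in {ω | E ω = e}, (Yinf t ω - Yinf s ω) ∂μ := by
  refine setIntegral_condExp_eq_of_condExp_indicator_eq_mul hX.comap_le
    (hE (measurableSet_singleton e)) ?_
  have h := hCPT e he s hs t ht
  rw [mul_ite_one_zero_eq_indicator, mZeroX, ite_one_zero_eq_indicator_one] at h
  exact h

theorem obsY_of_mem_cohort {Ω : Type*} {T : ℕ} {E : Ω → ℕ} {Ye : ℕ → ℕ → Ω → ℝ}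
    {Yinf : ℕ → Ω → ℝ} {e : ℕ} (he : e ∈ Finset.Icc 1 T) {ω : Ω} (hω : E ω = e) (s : ℕ) :
    obsY T E Ye Yinf s ω = Ye e s ω := by
  simp [obsY, hω, mul_ite, he]

theorem NA.obsY_sub_obsY_zero_ae_eq {Ω : Type*} [MeasurableSpace Ω] {μ : Measure Ω} {T : ℕ}
    {E : Ω → ℕ} {Ye : ℕ → ℕ → Ω → ℝ} {Yinf : ℕ → Ω → ℝ} (hNA : NA μ T Ye Yinf)
    (hE : Measurable E) {e : ℕ} (he : e ∈ Finset.Icc 1 T) (t : ℕ) :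
    (fun ω => obsY T E Ye Yinf t ω - obsY T E Ye Yinf 0 ω)
      =ᵐ[μ.restrict {ω | E ω = e}] fun ω => Ye e t ω - Yinf 0 ω := by
  filter_upwards [ae_restrict_mem (hE (measurableSet_singleton e)),
    ae_restrict_of_ae (hNA e he 0 (Finset.mem_Icc.mp he).1)] with ω hω hω0
  rw [obsY_of_mem_cohort he hω, obsY_of_mem_cohort he hω, hω0]

theorem regression_adjustment_identifies_catt_general
    {Ω 𝒳 : Type*} [MeasurableSpace Ω] [MeasurableSpace 𝒳]
    (μ : Measure Ω) [IsProbabilityMeasure μ]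
    (T : ℕ)
    (E : Ω → ℕ) (hE : Measurable E)
    (Ye : ℕ → ℕ → Ω → ℝ) (Yinf : ℕ → Ω → ℝ)
    (hL2e : ∀ e ∈ Finset.Icc 1 T, ∀ t ≤ T, MemLp (Ye e t) 2 μ)
    (hL2inf : ∀ t ≤ T, MemLp (Yinf t) 2 μ)
    (X : Ω → 𝒳) (hX : Measurable X)
    (hCPT : CPT μ T E Yinf X) (hNA : NA μ T Ye Yinf)
    (l t : ℕ) (hl : l ≤ t) (ht : t + 1 ≤ T)
    (he : t - l ∈ Finset.Icc 1 T) :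
    cexp μ
        (fun ω => obsY T E Ye Yinf t ω - obsY T E Ye Yinf 0 ω - gZero μ Yinf X t ω)
        {ω | E ω = t - l}
      = CATT μ E Ye Yinf (t - l) (l : ℤ) := by
  have htT : t ≤ T := by omega
  have hcast : ((((t - l : ℕ) : ℤ) + l).toNat) = t := by omega
  have hATT : Integrable (fun ω => Ye (t - l) t ω - Yinf t ω) μ :=
    ((hL2e _ he t htT).integrable one_le_two).sub ((hL2inf t htT).integrable one_le_two)
  have hD : Integrable (fun ω => Yinf t ω - Yinf 0 ω) μ :=
    ((hL2inf t htT).integrable one_le_two).sub ((hL2inf 0 T.zero_le).integrable one_le_two)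
  have hdecomp : (fun ω => obsY T E Ye Yinf t ω - obsY T E Ye Yinf 0 ω - gZero μ Yinf X t ω)
      =ᵐ[μ.restrict {ω | E ω = t - l}] fun ω =>
        (Ye (t - l) t ω - Yinf t ω) + ((Yinf t ω - Yinf 0 ω) - gZero μ Yinf X t ω) := by
    filter_upwards [hNA.obsY_sub_obsY_zero_ae_eq hE he t] with ω hω
    rw [hω]
    ring
  have hg : Integrable (fun ω => Yinf t ω - Yinf 0 ω - gZero μ Yinf X t ω) μ :=
    hD.sub integrable_condExp
  have hzero : ∫ ω in {ω | E ω = t - l}, (Yinf t ω - Yinf 0 ω - gZero μ Yinf X t ω) ∂μ = 0 := by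
    rw [gZero, integral_sub hD.integrableOn integrable_condExp.integrableOn,
      hCPT.setIntegral_condExp_eq hE hX he T.zero_le htT, sub_self]
  rw [cexp, CATT, cexp, hcast, integral_congr_ae hdecomp,
    integral_add hATT.integrableOn hg.integrableOn, hzero, add_zero]

/-- Appendix C (regression adjustment): under CPT and NA,
`E[Y_t − Y_0 − g₀ | E = e] = θ₀ = CATT(e,l)` where `e = t − l`. -/
theorem regression_adjustment_identifies_catt
    {Ω 𝒳 : Type*} [MeasurableSpace Ω] [MeasurableSpace 𝒳]
    (μ : Measure Ω) [IsProbabilityMeasure μ]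
    (T : ℕ) (hT : 1 ≤ T)
    (E : Ω → ℕ) (hE : Measurable E)
    (hsupp : μ {ω | 1 ≤ E ω ∧ E ω ≤ T} = 1)
    (hpos : ∀ e ∈ Finset.Icc 1 T, 0 < μ {ω | E ω = e})
    (Ye : ℕ → ℕ → Ω → ℝ) (Yinf : ℕ → Ω → ℝ)
    (hL2e : ∀ e ∈ Finset.Icc 1 T, ∀ t ≤ T, MemLp (Ye e t) 2 μ)
    (hL2inf : ∀ t ≤ T, MemLp (Yinf t) 2 μ)
    (X : Ω → 𝒳) (hX : Measurable X)
    (hCPT : CPT μ T E Yinf X) (hNA : NA μ T Ye Yinf)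
    (l t : ℕ) (hl : l ≤ t) (ht : t + 1 ≤ T)
    (he : t - l ∈ Finset.Icc 1 T) :
    cexp μ
        (fun ω => obsY T E Ye Yinf t ω - obsY T E Ye Yinf 0 ω - gZero μ Yinf X t ω)
        {ω | E ω = t - l}
      = CATT μ E Ye Yinf (t - l) (l : ℤ) :=
  regression_adjustment_identifies_catt_general μ T E hE Ye Yinf hL2e hL2inf X hX hCPT hNA l t hl ht
    he

end
end

section
/- Assume conditional parallel trends (CPT) and no anticipation (NA), and assume n₀(X) ≥ ε almost surely for some ε > 0. Then the inverse-propensity-score reweighting identification result holds: E[(1{E=e}/m₀ − 1{E>t}·m₀(X)/(m₀·n₀(X)))·(Y_t − Y_0)] = θ₀, where θ₀ = CATT(e,l). (Appendix C: the reweighted contrast between cohort e and not-yet-treated units identifies the cohort-specific ATT.) -/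
open MeasureTheory Filter

noncomputable section

/-!
On the cohort `E = e`, no anticipation turns the observed contrast `Y_t − Y_0` into the
treatment effect `Yᵉ_t − Y∞_t` plus the baseline trend `D := Y∞_t − Y∞_0`; on the not-yet-treated
units `E > t` it is the baseline trend `D` alone. Summing conditional parallel trends over the
cohorts `e' > t` gives `E[D·1{E>t} | X] = E[D | X]·n₀(X)`, so reweighting the not-yet-treated
units by `m₀(X)/n₀(X)` reproduces `E[D·1{E=e}] = E[E[D | X]·m₀(X)]`, and the two trend terms cancel.
-/

section CondExp

variable {Ω : Type*} {m mΩ : MeasurableSpace Ω} {μ : Measure Ω}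

theorem condExp_mul_finsetSum_ae_eq {ι : Type*} {s : Finset ι} {D : Ω → ℝ} {w : ι → Ω → ℝ}
    (hw : ∀ i ∈ s, Integrable (w i) μ) (hDw : ∀ i ∈ s, Integrable (fun ω => D ω * w i ω) μ)
    (h : ∀ i ∈ s, μ[fun ω => D ω * w i ω | m] =ᵐ[μ] fun ω => μ[D | m] ω * μ[w i | m] ω) :
    μ[fun ω => D ω * ∑ i ∈ s, w i ω | m]
      =ᵐ[μ] fun ω => μ[D | m] ω * μ[fun ω => ∑ i ∈ s, w i ω | m] ω := by
  simp only [Finset.mul_sum, ← Finset.sum_fn]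
  filter_upwards [condExp_finsetSum hDw m, condExp_finsetSum hw m,
    (eventually_all_finset s).2 h] with ω hDw hw h
  rw [hDw, hw, Finset.sum_apply, Finset.sum_apply, Finset.mul_sum]
  exact Finset.sum_congr rfl h

theorem integral_mul_condExp_of_stronglyMeasurable (hm : m ≤ mΩ) [SigmaFinite (μ.trim hm)]
    {f g : Ω → ℝ} (hf : StronglyMeasurable[m] f) (hfg : Integrable (f * g) μ)
    (hg : Integrable g μ) : ∫ ω, f ω * μ[g | m] ω ∂μ = ∫ ω, f ω * g ω ∂μ :=
  calc ∫ ω, f ω * μ[g | m] ω ∂μ = ∫ ω, μ[f * g | m] ω ∂μ :=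
        integral_congr_ae (condExp_mul_of_stronglyMeasurable_left hf hfg hg).symm
    _ = ∫ ω, f ω * g ω ∂μ := integral_condExp hm

theorem integral_condExp_div_condExp_mul (hm : m ≤ mΩ) [SigmaFinite (μ.trim hm)]
    {D a b : Ω → ℝ} (hDb : Integrable (fun ω => D ω * b ω) μ)
    (hw : Integrable (fun ω => μ[a | m] ω / μ[b | m] ω * (D ω * b ω)) μ)
    (hb : ∀ᵐ ω ∂μ, μ[b | m] ω ≠ 0)
    (hDa_cond : μ[fun ω => D ω * a ω | m] =ᵐ[μ] fun ω => μ[D | m] ω * μ[a | m] ω)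
    (hDb_cond : μ[fun ω => D ω * b ω | m] =ᵐ[μ] fun ω => μ[D | m] ω * μ[b | m] ω) :
    ∫ ω, μ[a | m] ω / μ[b | m] ω * (D ω * b ω) ∂μ = ∫ ω, D ω * a ω ∂μ := by
  have hw_meas : StronglyMeasurable[m] fun ω => μ[a | m] ω / μ[b | m] ω :=
    (stronglyMeasurable_condExp.measurable.div
      stronglyMeasurable_condExp.measurable).stronglyMeasurable
  calc ∫ ω, μ[a | m] ω / μ[b | m] ω * (D ω * b ω) ∂μ
      = ∫ ω, μ[a | m] ω / μ[b | m] ω * μ[fun ω => D ω * b ω | m] ω ∂μ :=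
        (integral_mul_condExp_of_stronglyMeasurable hm hw_meas hw hDb).symm
    _ = ∫ ω, μ[fun ω => D ω * a ω | m] ω ∂μ := by
        refine integral_congr_ae ?_
        filter_upwards [hb, hDa_cond, hDb_cond] with ω hb hDa_cond hDb_cond
        rw [hDa_cond, hDb_cond]
        field_simp
    _ = ∫ ω, D ω * a ω ∂μ := integral_condExp hm

end CondExp

section Indicator

variable {Ω : Type*} [MeasurableSpace Ω] {μ : Measure Ω} {p : Ω → Prop} [DecidablePred p]

theorem MeasureTheory.Integrable.mul_ite_one {f : Ω → ℝ} (hf : Integrable f μ)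
    (hp : MeasurableSet {ω | p ω}) :
    Integrable (fun ω => f ω * if p ω then 1 else 0) μ :=
  (hf.indicator hp).congr (ae_of_all _ fun ω => by by_cases h : p ω <;> simp [h])

theorem integrable_ite_one [IsFiniteMeasure μ] (hp : MeasurableSet {ω | p ω}) :
    Integrable (fun ω => if p ω then (1 : ℝ) else 0) μ := by
  simpa using (integrable_const (1 : ℝ)).mul_ite_one (μ := μ) hp

theorem integral_mul_ite_one (f : Ω → ℝ) (hp : MeasurableSet {ω | p ω}) :
    ∫ ω, f ω * (if p ω then 1 else 0) ∂μ = ∫ ω in {ω | p ω}, f ω ∂μ := by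
  rw [← integral_indicator hp]
  congr 1 with ω
  by_cases h : p ω <;> simp [h]

end Indicator

theorem obsY_eq_of_mem {Ω : Type*} {T : ℕ} {E : Ω → ℕ} {Ye : ℕ → ℕ → Ω → ℝ}
    {Yinf : ℕ → Ω → ℝ} {s : ℕ} {ω : Ω} (h : E ω ∈ Finset.Icc 1 T) :
    obsY T E Ye Yinf s ω = Ye (E ω) s ω := by
  simp only [obsY, mul_ite, mul_one, mul_zero, Finset.sum_ite_eq, h, if_true]
  ring

section EventStudy

variable {Ω 𝒳 : Type*} [MeasurableSpace Ω] [MeasurableSpace 𝒳] {μ : Measure Ω} {T : ℕ}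
  {E : Ω → ℕ} {Ye : ℕ → ℕ → Ω → ℝ} {Yinf : ℕ → Ω → ℝ} {X : Ω → 𝒳}

theorem ae_obsY_eq_of_lt (hNA : NA μ T Ye Yinf) :
    ∀ᵐ ω ∂μ, ∀ s < E ω, obsY T E Ye Yinf s ω = Yinf s ω := by
  have hNA' : ∀ᵐ ω ∂μ, ∀ e ∈ Finset.Icc 1 T, ∀ s < e, Ye e s ω = Yinf s ω := by
    refine (eventually_all_finset _).2 fun e he => ae_all_iff.2 fun s => ?_
    by_cases hs : s < e
    · filter_upwards [hNA e he s hs] with ω h _ using h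
    · exact ae_of_all _ fun ω h => (hs h).elim
  filter_upwards [hNA'] with ω hω s hs
  rw [obsY, Finset.sum_eq_zero, add_zero]
  intro e he
  by_cases hEe : E ω = e
  · simp [hω e he s (hEe ▸ hs)]
  · simp [hEe]

theorem ae_ite_eq_mul_obsY_sub (hNA : NA μ T Ye Yinf) {e : ℕ} (he : e ∈ Finset.Icc 1 T)
    {s : ℕ} (hs : s < e) (r : ℕ) :
    ∀ᵐ ω ∂μ, (if E ω = e then (1 : ℝ) else 0) * (obsY T E Ye Yinf r ω - obsY T E Ye Yinf s ω)
      = (Ye e r ω - Yinf r ω) * (if E ω = e then 1 else 0)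
        + (Yinf r ω - Yinf s ω) * (if E ω = e then 1 else 0) := by
  filter_upwards [ae_obsY_eq_of_lt hNA] with ω hω
  by_cases hEe : E ω = e
  · rw [obsY_eq_of_mem (hEe ▸ he), hω s (hEe ▸ hs), hEe]
    ring
  · simp [hEe]

theorem ae_ite_lt_mul_obsY_sub (hNA : NA μ T Ye Yinf) {s t : ℕ} (hs : s ≤ t) :
    ∀ᵐ ω ∂μ, (if t < E ω then (1 : ℝ) else 0) * (obsY T E Ye Yinf t ω - obsY T E Ye Yinf s ω)
      = (Yinf t ω - Yinf s ω) * (if t < E ω then 1 else 0) := by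
  filter_upwards [ae_obsY_eq_of_lt hNA] with ω hω
  by_cases hlt : t < E ω
  · rw [hω t hlt, hω s (hs.trans_lt hlt)]
    ring
  · simp [hlt]

theorem ae_ipw_integrand_eq (hNA : NA μ T Ye Yinf) {e : ℕ} (he : e ∈ Finset.Icc 1 T) (t : ℕ)
    (c : ℝ) (p q : Ω → ℝ) :
    ∀ᵐ ω ∂μ, ((if E ω = e then (1 : ℝ) else 0) / c
          - (if t < E ω then (1 : ℝ) else 0) * p ω / (c * q ω))
        * (obsY T E Ye Yinf t ω - obsY T E Ye Yinf 0 ω)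
      = c⁻¹ * ((Ye e t ω - Yinf t ω) * if E ω = e then 1 else 0)
        + c⁻¹ * ((Yinf t ω - Yinf 0 ω) * if E ω = e then 1 else 0)
        - c⁻¹ * (p ω / q ω * ((Yinf t ω - Yinf 0 ω) * if t < E ω then 1 else 0)) := by
  filter_upwards [ae_ite_eq_mul_obsY_sub hNA he (Finset.mem_Icc.1 he).1 t,
    ae_ite_lt_mul_obsY_sub hNA (Nat.zero_le t)] with ω hcohort hnyt
  calc _ = c⁻¹ * ((if E ω = e then 1 else 0) * (obsY T E Ye Yinf t ω - obsY T E Ye Yinf 0 ω))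
        - c⁻¹ * (p ω / q ω
          * ((if t < E ω then 1 else 0) * (obsY T E Ye Yinf t ω - obsY T E Ye Yinf 0 ω))) := by
        ring
    _ = _ := by rw [hcohort, hnyt]; ring

theorem condExp_mul_ite_lt_ae_eq (hE : Measurable E) (hET : ∀ᵐ ω ∂μ, E ω ≤ T)
    [IsFiniteMeasure μ] (hCPT : CPT μ T E Yinf X) {r s : ℕ} (hr : r ≤ T) (hs : s ≤ T)
    (hD : Integrable (fun ω => Yinf r ω - Yinf s ω) μ) (t : ℕ) :
    μ[fun ω => (Yinf r ω - Yinf s ω) * (if t < E ω then 1 else 0) | sigmaX X]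
      =ᵐ[μ] fun ω => μ[fun ω' => Yinf r ω' - Yinf s ω' | sigmaX X] ω * nZeroX μ E X t ω := by
  have hsum : (fun ω => if t < E ω then (1 : ℝ) else 0)
      =ᵐ[μ] fun ω => ∑ e ∈ Finset.Ioc t T, if E ω = e then 1 else 0 := by
    filter_upwards [hET] with ω hω
    simp [Finset.sum_ite_eq, Finset.mem_Ioc, hω]
  have hcohort : ∀ e ∈ Finset.Ioc t T, e ∈ Finset.Icc 1 T := fun e he => by
    simp only [Finset.mem_Ioc, Finset.mem_Icc] at he ⊢
    omega
  calc μ[fun ω => (Yinf r ω - Yinf s ω) * (if t < E ω then 1 else 0) | sigmaX X]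
      =ᵐ[μ] μ[fun ω => (Yinf r ω - Yinf s ω) *
          ∑ e ∈ Finset.Ioc t T, if E ω = e then 1 else 0 | sigmaX X] :=
        condExp_congr_ae (by filter_upwards [hsum] with ω h; rw [h])
    _ =ᵐ[μ] fun ω => μ[fun ω' => Yinf r ω' - Yinf s ω' | sigmaX X] ω *
          μ[fun ω => ∑ e ∈ Finset.Ioc t T, if E ω = e then 1 else 0 | sigmaX X] ω :=
        condExp_mul_finsetSum_ae_eq
          (fun e _ => integrable_ite_one (hE (measurableSet_singleton e)))
          (fun e _ => hD.mul_ite_one (hE (measurableSet_singleton e)))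
          (fun e he => hCPT e (hcohort e he) s hs r hr)
    _ =ᵐ[μ] fun ω => μ[fun ω' => Yinf r ω' - Yinf s ω' | sigmaX X] ω * nZeroX μ E X t ω := by
        filter_upwards [condExp_congr_ae (m := sigmaX X) hsum] with ω h
        rw [nZeroX, h]

theorem MeasureTheory.Integrable.mZeroX_div_nZeroX_mul (hX : Measurable X) {ε : ℝ} (hε : 0 < ε)
    {t : ℕ} (hn : ∀ᵐ ω ∂μ, ε ≤ nZeroX μ E X t ω) (e : ℕ) {f : Ω → ℝ} (hf : Integrable f μ) :
    Integrable (fun ω => mZeroX μ E X e ω / nZeroX μ E X t ω * f ω) μ := by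
  have hmeas : StronglyMeasurable[sigmaX X] fun ω => mZeroX μ E X e ω / nZeroX μ E X t ω :=
    (stronglyMeasurable_condExp.measurable.div
      stronglyMeasurable_condExp.measurable).stronglyMeasurable
  have hm_le : ∀ᵐ ω ∂μ, |mZeroX μ E X e ω| ≤ 1 :=
    ae_bdd_abs_condExp_of_ae_bdd_abs (ae_of_all _ fun ω => by split_ifs <;> simp)
  refine hf.bdd_mul (c := ε⁻¹) (hmeas.mono hX.comap_le).aestronglyMeasurable ?_
  filter_upwards [hm_le, hn] with ω hm_le hn
  rw [Real.norm_eq_abs, abs_div, abs_of_pos (hε.trans_le hn), ← one_div]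
  exact div_le_div₀ zero_le_one hm_le hε hn

end EventStudy

theorem ipw_identifies_catt_general
    {Ω 𝒳 : Type*} [MeasurableSpace Ω] [MeasurableSpace 𝒳]
    (μ : Measure Ω) [IsProbabilityMeasure μ]
    (T : ℕ)
    (E : Ω → ℕ) (hE : Measurable E)
    (hsupp : μ {ω | 1 ≤ E ω ∧ E ω ≤ T} = 1)
    (Ye : ℕ → ℕ → Ω → ℝ) (Yinf : ℕ → Ω → ℝ)
    (hL2e : ∀ e ∈ Finset.Icc 1 T, ∀ t ≤ T, MemLp (Ye e t) 2 μ)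
    (hL2inf : ∀ t ≤ T, MemLp (Yinf t) 2 μ)
    (X : Ω → 𝒳) (hX : Measurable X)
    (hCPT : CPT μ T E Yinf X) (hNA : NA μ T Ye Yinf)
    (l t : ℕ) (ht : t + 1 ≤ T)
    (he : t - l ∈ Finset.Icc 1 T)
    (ε : ℝ) (hε : 0 < ε) (hn : ∀ᵐ ω ∂μ, ε ≤ nZeroX μ E X t ω) :
    ∫ ω,
        ((if E ω = t - l then (1 : ℝ) else 0) / (μ {ω' | E ω' = t - l}).toReal
          - (if t < E ω then (1 : ℝ) else 0) * mZeroX μ E X (t - l) ω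
            / ((μ {ω' | E ω' = t - l}).toReal * nZeroX μ E X t ω))
        * (obsY T E Ye Yinf t ω - obsY T E Ye Yinf 0 ω) ∂μ
      = CATT μ E Ye Yinf (t - l) (l : ℤ) := by
  set e := t - l
  have hET : ∀ᵐ ω ∂μ, E ω ≤ T := by
    filter_upwards [(mem_ae_iff_prob_eq_one (hE measurableSet_Icc)).2 hsupp] with ω hω using hω.2
  have hcohort : MeasurableSet {ω | E ω = e} := hE (measurableSet_singleton e)
  have hnyt : MeasurableSet {ω | t < E ω} := hE measurableSet_Ioi
  have hD : Integrable (fun ω => Yinf t ω - Yinf 0 ω) μ :=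
    ((hL2inf t (by omega)).sub (hL2inf 0 (by omega))).integrable one_le_two
  have hτ : Integrable (fun ω => Ye e t ω - Yinf t ω) μ :=
    ((hL2e e he t (by omega)).sub (hL2inf t (by omega))).integrable one_le_two
  have hw := (hD.mul_ite_one hnyt).mZeroX_div_nZeroX_mul hX hε hn e
  have hreweight : ∫ ω, mZeroX μ E X e ω / nZeroX μ E X t ω
      * ((Yinf t ω - Yinf 0 ω) * if t < E ω then 1 else 0) ∂μ
      = ∫ ω, (Yinf t ω - Yinf 0 ω) * (if E ω = e then 1 else 0) ∂μ :=
    integral_condExp_div_condExp_mul hX.comap_le (hD.mul_ite_one hnyt) hw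
      (hn.mono fun ω h => (hε.trans_le h).ne') (hCPT e he 0 (by omega) t (by omega))
      (condExp_mul_ite_lt_ae_eq hE hET hCPT (by omega) (by omega) hD t)
  have hCATT : CATT μ E Ye Yinf e l = (μ {ω | E ω = e}).toReal⁻¹
      * ∫ ω, (Ye e t ω - Yinf t ω) * (if E ω = e then 1 else 0) ∂μ := by
    rw [CATT, cexp, integral_mul_ite_one _ hcohort,
      show ((e : ℤ) + l).toNat = t by have := (Finset.mem_Icc.1 he).1; omega, inv_mul_eq_div]
  have hτ_cohort := (hτ.mul_ite_one hcohort).const_mul (μ {ω | E ω = e}).toReal⁻¹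
  have hD_cohort := (hD.mul_ite_one hcohort).const_mul (μ {ω | E ω = e}).toReal⁻¹
  rw [integral_congr_ae (ae_ipw_integrand_eq hNA he t _ _ _), integral_sub ?_ (hw.const_mul _),
    integral_add hτ_cohort hD_cohort, integral_const_mul, integral_const_mul, integral_const_mul,
    hreweight, hCATT]
  · ring
  · exact hτ_cohort.add hD_cohort

/-- Appendix C (inverse-propensity-score reweighting): under CPT and NA, with the
not-yet-treated propensity bounded away from zero,
`E[(1{E=e}/m₀ − 1{E>t}·m₀(X)/(m₀·n₀(X)))·(Y_t − Y_0)] = θ₀ = CATT(e,l)` where `e = t − l`. -/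
theorem ipw_identifies_catt
    {Ω 𝒳 : Type*} [MeasurableSpace Ω] [MeasurableSpace 𝒳]
    (μ : Measure Ω) [IsProbabilityMeasure μ]
    (T : ℕ) (hT : 1 ≤ T)
    (E : Ω → ℕ) (hE : Measurable E)
    (hsupp : μ {ω | 1 ≤ E ω ∧ E ω ≤ T} = 1)
    (hpos : ∀ e ∈ Finset.Icc 1 T, 0 < μ {ω | E ω = e})
    (Ye : ℕ → ℕ → Ω → ℝ) (Yinf : ℕ → Ω → ℝ)
    (hL2e : ∀ e ∈ Finset.Icc 1 T, ∀ t ≤ T, MemLp (Ye e t) 2 μ)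
    (hL2inf : ∀ t ≤ T, MemLp (Yinf t) 2 μ)
    (X : Ω → 𝒳) (hX : Measurable X)
    (hCPT : CPT μ T E Yinf X) (hNA : NA μ T Ye Yinf)
    (l t : ℕ) (hl : l ≤ t) (ht : t + 1 ≤ T)
    (he : t - l ∈ Finset.Icc 1 T)
    (ε : ℝ) (hε : 0 < ε) (hn : ∀ᵐ ω ∂μ, ε ≤ nZeroX μ E X t ω) :
    ∫ ω,
        ((if E ω = t - l then (1 : ℝ) else 0) / (μ {ω' | E ω' = t - l}).toReal
          - (if t < E ω then (1 : ℝ) else 0) * mZeroX μ E X (t - l) ω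
            / ((μ {ω' | E ω' = t - l}).toReal * nZeroX μ E X t ω))
        * (obsY T E Ye Yinf t ω - obsY T E Ye Yinf 0 ω) ∂μ
      = CATT μ E Ye Yinf (t - l) (l : ℤ) :=
  ipw_identifies_catt_general μ T E hE hsupp Ye Yinf hL2e hL2inf X hX hCPT hNA l t ht he ε hε hn
end
end
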